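/- arXiv:1105.6190 — 2 statements merged into one kernel-verified Lean document; each statement's English description precedes it below -/
import Mathlib

section
/- Let L be an integral ℓ-monoid, let α be a fuzzy regular expression over a finite alphabet X with associated alphabet Y, let A = (A, X∪Y, δ^A, a₀, τ^A) be an arbitrary nondeterministic finite automaton recognizing ‖α_R‖, and let A^r_α be the reduced fuzzy automaton associated with A and α. Then L(A^r_α) = ‖α‖, i.e., L(A^r_α)(u) = ‖α‖(u) for every u ∈ X*. -/
attribute [local instance] Classical.propDecidable

/-- A lattice-ordered monoid (ℓ-monoid): a lattice with least element `⊥` and greatest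
element `⊤`, together with a monoid structure (multiplication `*`, unit `1`, playing the
role of `e`) such that `⊥` (playing the role of the scalar `0`) is absorbing and
multiplication distributes over binary joins on both sides. -/
class LMonoid (L : Type*) extends Lattice L, BoundedOrder L, Monoid L where
  mul_bot : ∀ x : L, x * ⊥ = ⊥
  bot_mul : ∀ x : L, ⊥ * x = ⊥
  mul_sup : ∀ x y z : L, x * (y ⊔ z) = x * y ⊔ x * z
  sup_mul : ∀ x y z : L, (x ⊔ y) * z = x * z ⊔ y * z

/-- An integral ℓ-monoid: the unit of the multiplication is the top element of the lattice. -/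
class IntegralLMonoid (L : Type*) extends LMonoid L where
  one_eq_top : (1 : L) = ⊤

/-- Fuzzy regular expressions over an alphabet `X` with scalars in `L`. -/
inductive FRE (X L : Type*) where
  | zero : FRE X L
  | eps : FRE X L
  | char : X → FRE X L
  | smul : L → FRE X L → FRE X L
  | plus : FRE X L → FRE X L → FRE X L
  | comp : FRE X L → FRE X L → FRE X L
  | star : FRE X L → FRE X L

/-- The set of scalars of `L` occurring in a fuzzy regular expression. -/
def FRE.scalars {X L : Type*} : FRE X L → Set L
  | .zero => ∅
  | .eps => ∅
  | .char _ => ∅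
  | .smul lam β => insert lam β.scalars
  | .plus β γ => β.scalars ∪ γ.scalars
  | .comp β γ => β.scalars ∪ γ.scalars
  | .star β => β.scalars

noncomputable section

namespace Fz

variable {L : Type*} [IntegralLMonoid L]

/-- Composition of fuzzy relations: `(R ∘ S)(a,b) = ⋁_{c} R(a,c) ⊗ S(c,b)`. -/
def fcomp {A : Type*} [Fintype A] (R S : A → A → L) : A → A → L :=
  fun a b => Finset.univ.sup fun c => R a c * S c b

/-- Composition of a fuzzy relation with a fuzzy set: `(R ∘ f)(a) = ⋁_{b} R(a,b) ⊗ f(b)`. -/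
def fcompf {A : Type*} [Fintype A] (R : A → A → L) (f : A → L) : A → L :=
  fun a => Finset.univ.sup fun b => R a b * f b

/-- Composition of a fuzzy set with a fuzzy relation: `(f ∘ R)(a) = ⋁_{b} f(b) ⊗ R(b,a)`. -/
def fcompfR {A : Type*} [Fintype A] (f : A → L) (R : A → A → L) : A → L :=
  fun a => Finset.univ.sup fun b => f b * R b a

/-- Powers of a fuzzy relation: `R⁰` is the crisp equality and `R^{k+1} = R^k ∘ R`. -/
def rpow {A : Type*} [Fintype A] (R : A → A → L) : ℕ → A → A → L
  | 0 => fun a b => if a = b then 1 else ⊥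
  | k + 1 => fcomp (rpow R k) R

private def dstarAux {A Z : Type*} [Fintype A] (δ : A → Z → A → L) : A → List Z → A → L
  | a, [], b => if a = b then 1 else ⊥
  | a, z :: w, b => Finset.univ.sup fun c => dstarAux δ a w c * δ c z b

/-- The extension of a fuzzy transition relation to words:
`δ(a, ε, b) = 1` if `a = b` and `⊥` otherwise, and
`δ(a, ux, b) = ⋁_{c} δ(a, u, c) ⊗ δ(c, x, b)`. -/
def dstar {A Z : Type*} [Fintype A] (δ : A → Z → A → L) (a : A) (w : List Z) (b : A) : L :=
  dstarAux δ a w.reverse b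

/-- Fuzzy language recognized by a fuzzy automaton with a single crisp initial state `a0`:
`L(A)(u) = ⋁_{b} δ(a0, u, b) ⊗ τ(b)`. -/
def lang {A Z : Type*} [Fintype A] (δ : A → Z → A → L) (a0 : A) (τ : A → L)
    (w : List Z) : L :=
  Finset.univ.sup fun b => dstar δ a0 w b * τ b

/-- Concatenation of fuzzy languages: `(fg)(u) = ⋁_{u = vw} f(v) ⊗ g(w)`
(a finite join over the factorizations of `u`). -/
def fconcat {X : Type*} (f g : List X → L) : List X → L :=
  fun u => (Finset.range (u.length + 1)).sup fun i => f (u.take i) * g (u.drop i)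

/-- Powers of a fuzzy language: `f⁰` is the characteristic function of the empty word,
and `f^{n+1} = fⁿ f`. -/
def fpow {X : Type*} (f : List X → L) : ℕ → List X → L
  | 0 => fun u => if u = [] then 1 else ⊥
  | n + 1 => fconcat (fpow f n) f

/-- `IsNorm α f` asserts that `f` is the fuzzy language `‖α‖` represented by the fuzzy
regular expression `α` (for the star, `‖β*‖(u)` is the least upper bound of the powers,
which is required to exist). -/
inductive IsNorm {X : Type*} : FRE X L → (List X → L) → Prop
  | zero : IsNorm .zero fun _ => ⊥
  | eps : IsNorm .eps fun u => if u = [] then 1 else ⊥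
  | char (x : X) : IsNorm (.char x) fun u => if u = [x] then 1 else ⊥
  | smul (lam : L) {β : FRE X L} {f : List X → L} :
      IsNorm β f → IsNorm (.smul lam β) fun u => lam * f u
  | plus {β γ : FRE X L} {f g : List X → L} :
      IsNorm β f → IsNorm γ g → IsNorm (.plus β γ) fun u => f u ⊔ g u
  | comp {β γ : FRE X L} {f g : List X → L} :
      IsNorm β f → IsNorm γ g → IsNorm (.comp β γ) (fconcat f g)
  | star {β : FRE X L} {f g : List X → L} :
      IsNorm β f → (∀ u, IsLUB {l | ∃ n : ℕ, l = fpow f n u} (g u)) →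
      IsNorm (.star β) g

/-- The ordinary regular expression `α_R` over `X ∪ Y` obtained from a fuzzy regular
expression `α` by replacing each scalar `λ` by the associated letter `λ' = sc λ ∈ Y`. -/
def toReg {X Y : Type*} (sc : L → Y) : FRE X L → RegularExpression (X ⊕ Y)
  | .zero => 0
  | .eps => 1
  | .char x => RegularExpression.char (Sum.inl x)
  | .smul lam β => RegularExpression.char (Sum.inr (sc lam)) * toReg sc β
  | .plus β γ => toReg sc β + toReg sc γ
  | .comp β γ => toReg sc β * toReg sc γ
  | .star β => (toReg sc β).star

/-- `U_Y(u)`: the set of words over `X ∪ Y` from which deleting all letters of `Y`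
yields `u` (the shuffle of `u` with `Y*`). -/
def UY {X : Type*} (Y : Type*) (u : List X) : Set (List (X ⊕ Y)) :=
  {v | v.filterMap (fun z => z.getLeft?) = u}

/-- The homomorphism `φ*_α : (X ∪ Y)* → (L, ⊗, 1)` determined by mapping every letter of
`X` to `1` and every letter `λ' ∈ Y` to the corresponding scalar `λ = φY λ'`. -/
def phiStar {X Y : Type*} (φY : Y → L) (v : List (X ⊕ Y)) : L :=
  (v.map (Sum.elim (fun _ => (1 : L)) φY)).prod

/-- The language `‖α_R‖` of the regular expression `α_R`, viewed as a fuzzy language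
with membership values in `{0, 1} ⊆ L`. -/
def langR {X Y : Type*} (sc : L → Y) (α : FRE X L) (v : List (X ⊕ Y)) : L :=
  if v ∈ (toReg sc α).matches' then 1 else ⊥

/-- The reflexive fuzzy relation `R` on the state set of a nondeterministic automaton over
`X ∪ Y`: `R(a,a) = 1` and, for `a ≠ b`, `R(a,b) = ⋁_{λ' ∈ Y} λ ⊗ δ(a, λ', b)`. -/
def Rstep {X Y A : Type*} [Fintype A] [Fintype Y] (φY : Y → L)
    (δ : A → X ⊕ Y → A → L) : A → A → L :=
  fun a b => if a = b then 1 else Finset.univ.sup fun y : Y => φY y * δ a (Sum.inr y) b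

/-- The fuzzy relation `R_A = Rⁿ`, `n = |A|`: the least transitive fuzzy relation
containing `R`. -/
def RA {X Y A : Type*} [Fintype A] [Fintype Y] (φY : Y → L)
    (δ : A → X ⊕ Y → A → L) : A → A → L :=
  rpow (Rstep φY δ) (Fintype.card A)

/-- The set `{φ*_α(v) ⊗ δ^A(a,v,b) : v ∈ U_Y(x)}` whose least upper bound defines the
transition `δ^{A_α}(a, x, b)` of the fuzzy automaton associated with `A` and `α`. -/
def dset {X Y A : Type*} [Fintype A] (φY : Y → L) (δ : A → X ⊕ Y → A → L)
    (a : A) (x : X) (b : A) : Set L :=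
  {l | ∃ v ∈ UY Y [x], l = phiStar φY v * dstar δ a v b}

/-- The set `{⋁_{b} φ*_α(v) ⊗ δ^A(a,v,b) ⊗ τ(b) : v ∈ Y*}` whose least upper bound defines
the terminal degree `τ^{A_α}(a)` of the fuzzy automaton associated with `A` and `α`. -/
def tset {X Y A : Type*} [Fintype A] (φY : Y → L) (δ : A → X ⊕ Y → A → L)
    (τ : A → L) (a : A) : Set L :=
  {l | ∃ w : List Y, l = Finset.univ.sup fun b =>
    phiStar φY ((w.map Sum.inr : List (X ⊕ Y))) *
      dstar δ a (w.map Sum.inr) b * τ b}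

end Fz

end

/-- The state set `A^r_α = {a₀} ∪ {a ∈ A : δ(b,x,a) = 1 for some b ∈ A, x ∈ X}` of the
reduced fuzzy automaton. -/
def redStates {L X Y A : Type*} [IntegralLMonoid L] (δ : A → X ⊕ Y → A → L) (a0 : A) :
    Set A :=
  {a | a = a0 ∨ ∃ (b : A) (x : X), δ b (Sum.inl x) a = 1}

/-!
Write `U_Y(u)` for the words over `X ∪ Y` from which erasing the letters of `Y` leaves `u`.
Both sides of the theorem are least upper bounds of weights of such words, attained by finitely
many of the weights; finiteness matters because `⊗` distributes only over finite joins.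

By induction on `α`, `‖α‖(u)` is the join of `φ*(v)` over `v ∈ U_Y(u) ∩ ‖α_R‖`; for the star
only the powers up to `|u|` matter, as all values lie below `1`. On the automaton side,
`R_A(a, b)` is the join of `φ*(w) ⊗ δ(a, w, b)` over `w ∈ Y*`, and by induction on `u` the
reduced automaton assigns to `u` the join of `φ*(v) ⊗ L(A)(v)` over `v ∈ U_Y(u)`. Since `L(A)`
is the characteristic function of `‖α_R‖`, the two sets of weights have the same upper bounds.
-/

open scoped Pointwise Computability

namespace LMonoid

variable {L : Type*} [LMonoid L]

instance : MulLeftMono L where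
  elim a b c h := by
    change a * b ≤ a * c
    calc a * b ≤ a * b ⊔ a * c := le_sup_left
      _ = a * c := by rw [← mul_sup, sup_eq_right.2 h]

instance : MulRightMono L where
  elim a b c h := by
    change b * a ≤ c * a
    calc b * a ≤ b * a ⊔ c * a := le_sup_left
      _ = c * a := by rw [← sup_mul, sup_eq_right.2 h]

theorem mul_finset_sup {ι : Type*} (a : L) (s : Finset ι) (f : ι → L) :
    a * s.sup f = s.sup fun i => a * f i := by
  classical
  induction s using Finset.induction_on with
  | empty => exact mul_bot a
  | insert _ _ _ ih => rw [Finset.sup_insert, Finset.sup_insert, mul_sup, ih]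

theorem finset_sup_mul {ι : Type*} (s : Finset ι) (f : ι → L) (a : L) :
    s.sup f * a = s.sup fun i => f i * a := by
  classical
  induction s using Finset.induction_on with
  | empty => exact bot_mul a
  | insert _ _ _ ih => rw [Finset.sup_insert, Finset.sup_insert, sup_mul, ih]

theorem finset_sup_mul_finset_sup (s t : Finset L) :
    s.sup id * t.sup id = (s * t).sup id := by
  rw [Finset.sup_mul_left, finset_sup_mul]
  simp only [id, mul_finset_sup]

theorem finset_sup_mul_ite_eq {A : Type*} [Fintype A] [DecidableEq A] (f : A → L) (b : A) :
    (Finset.univ.sup fun c => f c * if c = b then 1 else ⊥) = f b := by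
  refine le_antisymm (Finset.sup_le fun c _ => ?_) (Finset.le_sup_of_le (Finset.mem_univ b) ?_)
  · split_ifs with h <;> simp [h, mul_bot]
  · simp

theorem finset_sup_ite_eq_mul {A : Type*} [Fintype A] [DecidableEq A] (f : A → L) (a : A) :
    (Finset.univ.sup fun c => (if a = c then 1 else ⊥) * f c) = f a := by
  refine le_antisymm (Finset.sup_le fun c _ => ?_) (Finset.le_sup_of_le (Finset.mem_univ a) ?_)
  · split_ifs with h <;> simp [h, bot_mul]
  · simp

end LMonoid

namespace IntegralLMonoid

variable {L : Type*} [IntegralLMonoid L]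

theorem le_one (x : L) : x ≤ 1 := one_eq_top (L := L) ▸ le_top

theorem mul_le_left (x y : L) : x * y ≤ x := mul_le_of_le_one_right' (le_one y)

end IntegralLMonoid

def IsCrisp {L : Type*} [LMonoid L] (x : L) : Prop := x = 1 ∨ x = ⊥

namespace IsCrisp

section

variable {L : Type*} [LMonoid L] {x y : L}

theorem commute (hx : IsCrisp x) (y : L) : Commute x y := by
  rcases hx with rfl | rfl
  · exact Commute.one_left y
  · exact (LMonoid.bot_mul y).trans (LMonoid.mul_bot y).symm

theorem mul (hx : IsCrisp x) (hy : IsCrisp y) : IsCrisp (x * y) := by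
  rcases hx with rfl | rfl
  · simpa using hy
  · exact Or.inr (LMonoid.bot_mul y)

end

theorem finset_sup {L ι : Type*} [IntegralLMonoid L] {s : Finset ι} {f : ι → L}
    (h : ∀ i ∈ s, IsCrisp (f i)) : IsCrisp (s.sup f) := by
  by_cases hs : ∃ i ∈ s, f i = 1
  · obtain ⟨i, hi, hfi⟩ := hs
    exact Or.inl (le_antisymm (IntegralLMonoid.le_one _) (hfi ▸ Finset.le_sup hi))
  · push Not at hs
    exact Or.inr ((Finset.sup_eq_bot_iff _ _).2 fun i hi => (h i hi).resolve_left (hs i hi))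

end IsCrisp

section FiniteSup

variable {L : Type*} [LMonoid L]

def LeFinSup (s : Set L) (x : L) : Prop :=
  ∃ t : Finset L, ↑t ⊆ s ∧ x ≤ t.sup id

/-- Unlike arbitrary least upper bounds, finitely attained ones are preserved by `⊗`. -/
def IsFinSup (s : Set L) (x : L) : Prop :=
  x ∈ upperBounds s ∧ LeFinSup s x

namespace LeFinSup

variable {s t : Set L} {x y : L}

theorem of_mem (hx : x ∈ s) : LeFinSup s x :=
  ⟨{x}, by simpa using hx, by simp⟩

theorem of_le (h : LeFinSup s y) (hxy : x ≤ y) : LeFinSup s x :=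
  let ⟨u, hu, hy⟩ := h
  ⟨u, hu, hxy.trans hy⟩

theorem mono_of_forall_exists_le (h : LeFinSup s x) (hst : ∀ a ∈ s, ∃ b ∈ t, a ≤ b) :
    LeFinSup t x := by
  choose! g hgt hle using hst
  obtain ⟨u, hus, hx⟩ := h
  refine ⟨u.image g, fun b hb => ?_, hx.trans ?_⟩
  · obtain ⟨a, ha, rfl⟩ := Finset.mem_image.1 hb
    exact hgt a (hus ha)
  · rw [Finset.sup_image]
    exact Finset.sup_mono_fun fun a ha => hle a (hus ha)

theorem mono (h : LeFinSup s x) (hst : s ⊆ t) : LeFinSup t x :=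
  h.mono_of_forall_exists_le fun a ha => ⟨a, hst ha, le_rfl⟩

theorem sup (hx : LeFinSup s x) (hy : LeFinSup s y) : LeFinSup s (x ⊔ y) := by
  obtain ⟨u, hus, hxu⟩ := hx
  obtain ⟨v, hvs, hyv⟩ := hy
  refine ⟨u ∪ v, by simpa using Set.union_subset hus hvs, ?_⟩
  rw [Finset.sup_union]
  exact sup_le_sup hxu hyv

theorem finset_sup {ι : Type*} {I : Finset ι} {f : ι → L} (h : ∀ i ∈ I, LeFinSup s (f i)) :
    LeFinSup s (I.sup f) := by
  choose! u hus hle using h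
  refine ⟨I.biUnion u, by simpa using hus, ?_⟩
  rw [Finset.sup_biUnion]
  exact Finset.sup_mono_fun hle

theorem mul (hx : LeFinSup s x) (hy : LeFinSup t y) : LeFinSup (s * t) (x * y) := by
  obtain ⟨u, hus, hxu⟩ := hx
  obtain ⟨v, hvt, hyv⟩ := hy
  refine ⟨u * v, by simpa using Set.mul_subset_mul hus hvt, ?_⟩
  rw [← LMonoid.finset_sup_mul_finset_sup]
  exact mul_le_mul' hxu hyv

end LeFinSup

namespace IsFinSup

variable {s t : Set L} {x y : L}

theorem le_of_mem_upperBounds (h : IsFinSup s x) (hy : y ∈ upperBounds s) : x ≤ y := by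
  obtain ⟨u, hus, hx⟩ := h.2
  exact hx.trans (Finset.sup_le fun a ha => hy (hus ha))

theorem of_forall_exists_le (h : IsFinSup s x) (hst : ∀ a ∈ s, ∃ b ∈ t, a ≤ b)
    (hx : x ∈ upperBounds t) : IsFinSup t x :=
  ⟨hx, h.2.mono_of_forall_exists_le hst⟩

theorem singleton (a : L) : IsFinSup {a} a :=
  ⟨by simp, .of_mem rfl⟩

theorem empty : IsFinSup (∅ : Set L) ⊥ :=
  ⟨by simp, ⟨∅, by simp, le_rfl⟩⟩

theorem union (hx : IsFinSup s x) (hy : IsFinSup t y) : IsFinSup (s ∪ t) (x ⊔ y) := by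
  refine ⟨?_, ?_⟩
  · rw [upperBounds_union]
    exact ⟨upperBounds_mono_mem le_sup_left hx.1, upperBounds_mono_mem le_sup_right hy.1⟩
  · exact (hx.2.mono Set.subset_union_left).sup (hy.2.mono Set.subset_union_right)

theorem mul (hx : IsFinSup s x) (hy : IsFinSup t y) : IsFinSup (s * t) (x * y) := by
  refine ⟨?_, hx.2.mul hy.2⟩
  rintro _ ⟨a, ha, b, hb, rfl⟩
  exact mul_le_mul' (hx.1 ha) (hy.1 hb)

theorem biUnion {ι : Type*} {I : Finset ι} {s : ι → Set L} {f : ι → L}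
    (h : ∀ i ∈ I, IsFinSup (s i) (f i)) : IsFinSup (⋃ i ∈ I, s i) (I.sup f) := by
  refine ⟨?_, LeFinSup.finset_sup fun i hi => (h i hi).2.mono (Set.subset_biUnion_of_mem hi)⟩
  intro a ha
  obtain ⟨i, hi, ha⟩ := Set.mem_iUnion₂.1 ha
  exact ((h i hi).1 ha).trans (Finset.le_sup hi)

theorem iUnion_of_le_finset_sup {ι : Type*} {s : ι → Set L} {f : ι → L} {x : L}
    (h : ∀ i, IsFinSup (s i) (f i)) (hx : IsLUB (Set.range f) x) (I : Finset ι)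
    (hI : ∀ i, f i ≤ I.sup f) : IsFinSup (⋃ i, s i) x := by
  refine ⟨?_, ?_⟩
  · intro a ha
    obtain ⟨i, ha⟩ := Set.mem_iUnion.1 ha
    exact ((h i).1 ha).trans (hx.1 ⟨i, rfl⟩)
  · refine (LeFinSup.finset_sup (I := I) fun i _ => (h i).2.mono (Set.subset_iUnion s i)).of_le ?_
    exact hx.2 (by rintro _ ⟨i, rfl⟩; exact hI i)

end IsFinSup

end FiniteSup

namespace Fz

section Shuffle

variable {L X Y : Type*} [IntegralLMonoid L]

theorem phiStar_append (φY : Y → L) (v w : List (X ⊕ Y)) :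
    phiStar φY (v ++ w) = phiStar φY v * phiStar φY w := by
  simp [phiStar]

theorem phiStar_cons_inl (φY : Y → L) (x : X) (v : List (X ⊕ Y)) :
    phiStar φY (Sum.inl x :: v) = phiStar φY v := by
  simp [phiStar]

theorem phiStar_cons_inr (φY : Y → L) (y : Y) (v : List (X ⊕ Y)) :
    phiStar φY (Sum.inr y :: v : List (X ⊕ Y)) = φY y * phiStar φY v := by
  simp [phiStar]

theorem mem_UY {u : List X} {v : List (X ⊕ Y)} :
    v ∈ UY Y u ↔ v.filterMap Sum.getLeft? = u :=
  Iff.rfl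

theorem append_mem_UY {u₁ u₂ : List X} {v₁ v₂ : List (X ⊕ Y)} (h₁ : v₁ ∈ UY Y u₁)
    (h₂ : v₂ ∈ UY Y u₂) : v₁ ++ v₂ ∈ UY Y (u₁ ++ u₂) := by
  rw [mem_UY] at *
  rw [List.filterMap_append, h₁, h₂]

theorem cons_inl_mem_UY_iff {x x' : X} {u : List X} {v : List (X ⊕ Y)} :
    Sum.inl x' :: v ∈ UY Y (x :: u) ↔ x' = x ∧ v ∈ UY Y u := by
  simp [mem_UY]

theorem cons_inr_mem_UY_iff {y : Y} {u : List X} {v : List (X ⊕ Y)} :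
    Sum.inr y :: v ∈ UY Y u ↔ v ∈ UY Y u := by
  rw [mem_UY, mem_UY, List.filterMap_cons]
  rfl

theorem mem_UY_cons_iff {x : X} {u : List X} {v : List (X ⊕ Y)} :
    v ∈ UY Y (x :: u) ↔ ∃ w ∈ UY Y [], ∃ v' ∈ UY Y u, v = w ++ Sum.inl x :: v' := by
  constructor
  · intro h
    obtain ⟨w, z, v', rfl, hw, hz, hv'⟩ := List.filterMap_eq_cons_iff.1 h
    rcases z with x' | y <;> simp only [Sum.getLeft?, Option.some.injEq, reduceCtorEq] at hz
    exact ⟨w, List.filterMap_eq_nil_iff.2 hw, v', hv', by rw [hz]⟩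
  · rintro ⟨w, hw, v', hv', rfl⟩
    simpa using append_mem_UY hw (cons_inl_mem_UY_iff.2 ⟨rfl, hv'⟩)

end Shuffle

section WeightsOver

variable {L X Y : Type*} [IntegralLMonoid L]

def weightsOver (φY : Y → L) (M : Language (X ⊕ Y)) (u : List X) : Set L :=
  phiStar φY '' {v | v ∈ UY Y u ∧ v ∈ M}

variable (φY : Y → L)

theorem weightsOver_zero (u : List X) : weightsOver φY 0 u = ∅ := by
  simp [weightsOver, Language.notMem_zero]

theorem weightsOver_singleton (v₀ : List (X ⊕ Y)) (u : List X) :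
    weightsOver φY {v₀} u = if v₀ ∈ UY Y u then {phiStar φY v₀} else ∅ := by
  ext a
  split_ifs with h
  · constructor
    · rintro ⟨v, ⟨-, rfl⟩, rfl⟩
      rfl
    · rintro rfl
      exact ⟨v₀, ⟨h, rfl⟩, rfl⟩
  · simp only [Set.mem_empty_iff_false, iff_false]
    rintro ⟨v, ⟨hv, rfl⟩, rfl⟩
    exact h hv

theorem weightsOver_add (M N : Language (X ⊕ Y)) (u : List X) :
    weightsOver φY (M + N) u = weightsOver φY M u ∪ weightsOver φY N u := by
  simp only [weightsOver, Language.mem_add, and_or_left, Set.ofPred_or, Set.image_union]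

theorem weightsOver_inr_mul (y : Y) (M : Language (X ⊕ Y)) (u : List X) :
    weightsOver φY ({[Sum.inr y]} * M) u = {φY y} * weightsOver φY M u := by
  ext a
  rw [Set.singleton_mul]
  constructor
  · rintro ⟨_, ⟨hv, _, rfl, v, hv', rfl⟩, rfl⟩
    exact ⟨phiStar φY v, ⟨v, ⟨cons_inr_mem_UY_iff.1 hv, hv'⟩, rfl⟩, (phiStar_cons_inr φY y v).symm⟩
  · rintro ⟨_, ⟨v, ⟨hv, hv'⟩, rfl⟩, rfl⟩
    exact ⟨_, ⟨cons_inr_mem_UY_iff.2 hv, _, rfl, v, hv', rfl⟩, phiStar_cons_inr φY y v⟩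

theorem weightsOver_mul (M N : Language (X ⊕ Y)) (u : List X) :
    weightsOver φY (M * N) u = ⋃ i ∈ Finset.range (u.length + 1),
      weightsOver φY M (u.take i) * weightsOver φY N (u.drop i) := by
  ext a
  simp only [weightsOver, Language.mem_mul, Set.mem_image, Set.mem_ofPred_eq, Set.mem_iUnion,
    Set.mem_mul, Finset.mem_range]
  constructor
  · rintro ⟨_, ⟨hu, v₁, hv₁, v₂, hv₂, rfl⟩, rfl⟩
    have hu' : u = v₁.filterMap Sum.getLeft? ++ v₂.filterMap Sum.getLeft? := by
      rw [← List.filterMap_append]; exact hu.symm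
    refine ⟨(v₁.filterMap Sum.getLeft?).length, by simp [hu'], _,
      ⟨v₁, ⟨?_, hv₁⟩, rfl⟩, _, ⟨v₂, ⟨?_, hv₂⟩, rfl⟩, (phiStar_append φY v₁ v₂).symm⟩ <;>
      simp [hu', UY]
  · rintro ⟨i, -, _, ⟨v₁, ⟨hu₁, hv₁⟩, rfl⟩, _, ⟨v₂, ⟨hu₂, hv₂⟩, rfl⟩, rfl⟩
    exact ⟨v₁ ++ v₂, ⟨by simpa using append_mem_UY hu₁ hu₂, v₁, hv₁, v₂, hv₂, rfl⟩,
      phiStar_append φY v₁ v₂⟩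

theorem weightsOver_kstar (M : Language (X ⊕ Y)) (u : List X) :
    weightsOver φY M∗ u = ⋃ n : ℕ, weightsOver φY (M ^ n) u := by
  simp only [weightsOver, Language.kstar_eq_iSup_pow, Language.mem_iSup, ← Set.image_iUnion]
  congr 1
  ext v
  simp

end WeightsOver

section Norm

variable {L X Y : Type*} [IntegralLMonoid L]

/-- Since `f ≤ 1`, powers beyond `|u|` add nothing at `u`: one of their factors reads the empty
word and can be dropped. -/
theorem fpow_le_sup_range (f : List X → L) (n : ℕ) (u : List X) :
    fpow f n u ≤ (Finset.range (u.length + 1)).sup fun m => fpow f m u := by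
  induction n using Nat.strong_induction_on generalizing u with
  | _ n ih =>
  rcases lt_or_ge n (u.length + 1) with hn | hn
  · exact Finset.le_sup (f := fun m => fpow f m u) (Finset.mem_range.2 hn)
  obtain ⟨k, rfl⟩ : ∃ k, n = k + 1 := ⟨n - 1, by omega⟩
  change (Finset.range (u.length + 1)).sup (fun i => fpow f k (u.take i) * f (u.drop i)) ≤ _
  refine Finset.sup_le fun i hi => ?_
  rcases eq_or_lt_of_le (Nat.lt_succ_iff.1 (Finset.mem_range.1 hi)) with rfl | hi
  · rw [List.take_length, List.drop_length]
    exact (IntegralLMonoid.mul_le_left _ _).trans (ih k (by omega) u)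
  have hlen : (u.take i).length = i := List.length_take_of_le hi.le
  calc fpow f k (u.take i) * f (u.drop i)
      ≤ ((Finset.range (i + 1)).sup fun m => fpow f m (u.take i)) * f (u.drop i) :=
        mul_le_mul_left ((ih k (by omega) (u.take i)).trans_eq (by rw [hlen])) _
    _ = (Finset.range (i + 1)).sup fun m => fpow f m (u.take i) * f (u.drop i) :=
        LMonoid.finset_sup_mul _ _ _
    _ ≤ (Finset.range (u.length + 1)).sup fun m => fpow f m u := by
        refine Finset.sup_le fun m hm => ?_
        have hm := Finset.mem_range.1 hm
        exact le_trans (b := fpow f (m + 1) u)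
          (Finset.le_sup (f := fun j => fpow f m (u.take j) * f (u.drop j))
            (Finset.mem_range.2 (by omega)))
          (Finset.le_sup (f := fun m => fpow f m u) (Finset.mem_range.2 (by omega)))

variable (φY : Y → L)

theorem isFinSup_weightsOver_one (u : List X) :
    IsFinSup (weightsOver φY 1 u) (if u = [] then 1 else ⊥) := by
  have : ([] : List (X ⊕ Y)) ∈ UY Y u ↔ u = [] := by simp [mem_UY, eq_comm]
  rw [show (1 : Language (X ⊕ Y)) = {[]} from rfl, weightsOver_singleton, if_congr this rfl rfl]
  split_ifs
  exacts [IsFinSup.singleton _, IsFinSup.empty]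

theorem isFinSup_weightsOver_inl (x : X) (u : List X) :
    IsFinSup (weightsOver φY {[Sum.inl x]} u) (if u = [x] then 1 else ⊥) := by
  have : [Sum.inl x] ∈ UY Y u ↔ u = [x] := by simp [mem_UY, eq_comm]
  rw [weightsOver_singleton, if_congr this rfl rfl, phiStar_cons_inl]
  split_ifs
  exacts [IsFinSup.singleton _, IsFinSup.empty]

variable {φY} {M N : Language (X ⊕ Y)} {f g : List X → L}

theorem isFinSup_weightsOver_mul (hM : ∀ u, IsFinSup (weightsOver φY M u) (f u))
    (hN : ∀ u, IsFinSup (weightsOver φY N u) (g u)) (u : List X) :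
    IsFinSup (weightsOver φY (M * N) u) (fconcat f g u) := by
  rw [weightsOver_mul]
  exact IsFinSup.biUnion fun i _ => (hM _).mul (hN _)

theorem isFinSup_weightsOver_pow (hM : ∀ u, IsFinSup (weightsOver φY M u) (f u)) (n : ℕ)
    (u : List X) : IsFinSup (weightsOver φY (M ^ n) u) (fpow f n u) := by
  induction n generalizing u with
  | zero => exact isFinSup_weightsOver_one φY u
  | succ n ih => exact isFinSup_weightsOver_mul ih hM u

theorem isFinSup_weightsOver_kstar (hM : ∀ u, IsFinSup (weightsOver φY M u) (f u)) {u : List X}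
    {x : L} (hx : IsLUB {l | ∃ n : ℕ, l = fpow f n u} x) :
    IsFinSup (weightsOver φY M∗ u) x := by
  rw [weightsOver_kstar]
  refine IsFinSup.iUnion_of_le_finset_sup (fun n => isFinSup_weightsOver_pow hM n u) ?_
    (Finset.range (u.length + 1)) (fun n => fpow_le_sup_range f n u)
  have hrange : Set.range (fun n => fpow f n u) = {l | ∃ n : ℕ, l = fpow f n u} := by
    ext; simp [eq_comm]
  rwa [hrange]

theorem isFinSup_norm (sc : L → Y) {β : FRE X L} {f : List X → L} (hf : IsNorm β f)
    (hφ : ∀ l ∈ β.scalars, φY (sc l) = l) (u : List X) :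
    IsFinSup (weightsOver φY (toReg sc β).matches' u) (f u) := by
  induction hf generalizing u with
  | zero => simpa [toReg, weightsOver_zero] using IsFinSup.empty
  | eps => exact isFinSup_weightsOver_one φY u
  | char x => exact isFinSup_weightsOver_inl φY x u
  | smul lam _ ih =>
    rw [toReg, RegularExpression.matches'_mul, RegularExpression.matches'_char,
      weightsOver_inr_mul, hφ lam (Set.mem_insert _ _)]
    exact (IsFinSup.singleton lam).mul (ih (fun l hl => hφ l (Set.mem_insert_of_mem _ hl)) u)
  | plus _ _ ih₁ ih₂ =>
    rw [toReg, RegularExpression.matches'_add, weightsOver_add]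
    exact (ih₁ (fun l hl => hφ l (Or.inl hl)) u).union (ih₂ (fun l hl => hφ l (Or.inr hl)) u)
  | comp _ _ ih₁ ih₂ =>
    rw [toReg, RegularExpression.matches'_mul]
    exact isFinSup_weightsOver_mul (ih₁ fun l hl => hφ l (Or.inl hl))
      (ih₂ fun l hl => hφ l (Or.inr hl)) u
  | star _ hlub ih =>
    rw [toReg, RegularExpression.matches'_star]
    exact isFinSup_weightsOver_kstar (ih hφ) (hlub u)

end Norm

section Paths

variable {L A : Type*} [IntegralLMonoid L]

def pathWeight (R : A → A → L) : List A → L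
  | a :: b :: l => R a b * pathWeight R (b :: l)
  | _ => 1

theorem pathWeight_append (R : A → A → L) (l₁ : List A) (c : A) (l₂ : List A) :
    pathWeight R (l₁ ++ c :: l₂) = pathWeight R (l₁ ++ [c]) * pathWeight R (c :: l₂) := by
  induction l₁ with
  | nil => exact (one_mul _).symm
  | cons a l₁ ih =>
    cases l₁ with
    | nil =>
      change R a c * _ = R a c * 1 * _
      rw [mul_one]
    | cons b l₁ => simp only [List.cons_append, pathWeight] at ih ⊢; rw [ih, mul_assoc]

theorem pathWeight_splice_le (R : A → A → L) (s : List A) (x : A) (t u : List A) :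
    pathWeight R (s ++ x :: (t ++ x :: u)) ≤ pathWeight R (s ++ x :: u) := by
  rw [pathWeight_append R s x (t ++ x :: u), pathWeight_append R s x u,
    show x :: (t ++ x :: u) = (x :: t) ++ x :: u from rfl, pathWeight_append R (x :: t) x u]
  exact mul_le_mul_right (mul_le_of_le_one_left' (IntegralLMonoid.le_one _)) _

theorem exists_eq_append_cons_append_cons_of_not_nodup {l : List A} (h : ¬l.Nodup) :
    ∃ s x t u, l = s ++ x :: (t ++ x :: u) := by
  induction l with
  | nil => exact absurd List.nodup_nil h
  | cons c r ih =>
    by_cases hc : c ∈ r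
    · obtain ⟨t, u, rfl⟩ := List.append_of_mem hc
      exact ⟨[], c, t, u, rfl⟩
    · obtain ⟨s, x, t, u, rfl⟩ := ih fun hr => h (List.nodup_cons.2 ⟨hc, hr⟩)
      exact ⟨c :: s, x, t, u, rfl⟩

end Paths

section Relations

variable {L A : Type*} [IntegralLMonoid L] [Fintype A]

theorem fcomp_assoc (R S T : A → A → L) : fcomp (fcomp R S) T = fcomp R (fcomp S T) := by
  funext a b
  simp only [fcomp, LMonoid.finset_sup_mul, LMonoid.mul_finset_sup, mul_assoc]
  exact Finset.sup_comm _ _ _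

theorem fcomp_ite_eq_left (R : A → A → L) :
    fcomp (fun a b => if a = b then 1 else ⊥) R = R := by
  funext a b
  exact LMonoid.finset_sup_ite_eq_mul (R · b) a

theorem fcomp_ite_eq_right (R : A → A → L) :
    fcomp R (fun a b => if a = b then 1 else ⊥) = R := by
  funext a b
  exact LMonoid.finset_sup_mul_ite_eq (R a) b

theorem rpow_succ' (R : A → A → L) (k : ℕ) : rpow R (k + 1) = fcomp R (rpow R k) := by
  induction k with
  | zero => exact (fcomp_ite_eq_left R).trans (fcomp_ite_eq_right R).symm
  | succ k ih =>
    calc rpow R (k + 2) = fcomp (fcomp R (rpow R k)) R := by rw [← ih]; rfl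
      _ = fcomp R (rpow R (k + 1)) := fcomp_assoc _ _ _

theorem rpow_mono {R : A → A → L} (hR : ∀ a, R a a = 1) {k m : ℕ} (hkm : k ≤ m) (a b : A) :
    rpow R k a b ≤ rpow R m a b := by
  induction hkm with
  | refl => exact le_rfl
  | step _ ih =>
    refine ih.trans (Finset.le_sup_of_le (Finset.mem_univ b) ?_)
    rw [hR, mul_one]

theorem pathWeight_le_rpow (R : A → A → L) (l : List A) (a b : A) :
    pathWeight R (a :: l ++ [b]) ≤ rpow R (l.length + 1) a b := by
  induction l generalizing a with
  | nil =>
    refine (mul_one _).le.trans (Finset.le_sup_of_le (Finset.mem_univ a) ?_)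
    change R a b ≤ (if a = a then 1 else ⊥) * R a b
    rw [if_pos rfl, one_mul]
  | cons c l ih =>
    rw [rpow_succ']
    exact Finset.le_sup_of_le (Finset.mem_univ c) (mul_le_mul_right (ih c) _)

/-- Pigeonhole: a path with more than `|A|` steps revisits a state, and cutting out the loop
does not decrease its weight, since all weights are below `1`. -/
theorem pathWeight_le_rpow_card {R : A → A → L} (hR : ∀ a, R a a = 1) (l : List A) (a b : A) :
    pathWeight R (a :: l ++ [b]) ≤ rpow R (Fintype.card A) a b := by
  induction hl : l.length using Nat.strong_induction_on generalizing l a with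
  | _ n ih =>
  by_cases hn : n < Fintype.card A
  · exact (pathWeight_le_rpow R l a b).trans (rpow_mono hR (by omega) a b)
  have hdup : ¬(a :: l).Nodup := fun hnd => by
    have := hnd.length_le_card
    simp only [List.length_cons] at this
    omega
  obtain ⟨s, x, t, u, hsplit⟩ := exists_eq_append_cons_append_cons_of_not_nodup hdup
  obtain ⟨l', hl'⟩ : ∃ l', s ++ x :: u = a :: l' := by
    cases s with
    | nil => exact ⟨u, by simp_all⟩
    | cons c s => exact ⟨s ++ x :: u, by simp_all⟩
  have hlen : l'.length < n := by
    have h₁ := congrArg List.length hsplit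
    have h₂ := congrArg List.length hl'
    simp only [List.length_cons, List.length_append] at h₁ h₂
    omega
  calc pathWeight R (a :: l ++ [b]) = pathWeight R (s ++ x :: (t ++ x :: (u ++ [b]))) := by
        rw [hsplit]; simp
    _ ≤ pathWeight R (s ++ x :: (u ++ [b])) := pathWeight_splice_le R s x t _
    _ = pathWeight R (a :: l' ++ [b]) := by rw [← hl']; simp
    _ ≤ rpow R (Fintype.card A) a b := ih _ hlen l' a rfl

theorem pathWeight_mul_rpow_le_rpow_card {R : A → A → L} (hR : ∀ a, R a a = 1) (n : ℕ)
    (l : List A) (a c b : A) :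
    pathWeight R (a :: l ++ [c]) * rpow R n c b ≤ rpow R (Fintype.card A) a b := by
  induction n generalizing l c with
  | zero =>
    change _ * (if c = b then 1 else ⊥) ≤ _
    split_ifs with hcb
    · rw [mul_one, hcb]
      exact pathWeight_le_rpow_card hR l a b
    · rw [LMonoid.mul_bot]
      exact bot_le
  | succ n ih =>
    rw [rpow_succ', fcomp, LMonoid.mul_finset_sup]
    refine Finset.sup_le fun d _ => ?_
    have hpath : pathWeight R (a :: (l ++ [c]) ++ [d]) = pathWeight R (a :: l ++ [c]) * R c d := by
      rw [show a :: (l ++ [c]) ++ [d] = (a :: l) ++ c :: [d] by simp, pathWeight_append]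
      exact congrArg _ (mul_one _)
    rw [← mul_assoc, ← hpath]
    exact ih (l ++ [c]) d

theorem rpow_le_rpow_card {R : A → A → L} (hR : ∀ a, R a a = 1) (n : ℕ) (a b : A) :
    rpow R n a b ≤ rpow R (Fintype.card A) a b := by
  cases n with
  | zero => exact rpow_mono hR (Nat.zero_le _) a b
  | succ n =>
    rw [rpow_succ', fcomp]
    refine Finset.sup_le fun c _ => ?_
    simpa [pathWeight] using pathWeight_mul_rpow_le_rpow_card hR n [] a c b

end Relations

section Runs

variable {L A Z : Type*} [IntegralLMonoid L] [Fintype A] (δ : A → Z → A → L)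

theorem dstar_nil (a b : A) : dstar δ a [] b = if a = b then 1 else ⊥ := rfl

theorem dstar_append_singleton (w : List Z) (z : Z) (a b : A) :
    dstar δ a (w ++ [z]) b = Finset.univ.sup fun c => dstar δ a w c * δ c z b := by
  simp only [dstar, List.reverse_append]
  rfl

theorem dstar_append (v w : List Z) (a b : A) :
    dstar δ a (v ++ w) b = Finset.univ.sup fun c => dstar δ a v c * dstar δ c w b := by
  induction w using List.reverseRecOn generalizing b with
  | nil => rw [List.append_nil]; exact (LMonoid.finset_sup_mul_ite_eq _ b).symm
  | append_singleton w z ih =>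
    simp only [← List.append_assoc, dstar_append_singleton, ih, LMonoid.finset_sup_mul,
      LMonoid.mul_finset_sup, mul_assoc]
    exact Finset.sup_comm _ _ _

theorem dstar_singleton (z : Z) (a b : A) : dstar δ a [z] b = δ a z b := by
  rw [← List.nil_append [z], dstar_append_singleton]
  exact LMonoid.finset_sup_ite_eq_mul (δ · z b) a

theorem lang_append (τ : A → L) (v w : List Z) (a : A) :
    lang δ a τ (v ++ w) = Finset.univ.sup fun c => dstar δ a v c * lang δ c τ w := by
  simp only [lang, dstar_append, LMonoid.finset_sup_mul, LMonoid.mul_finset_sup, mul_assoc]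
  exact Finset.sup_comm _ _ _

theorem lang_nil (τ : A → L) (a : A) : lang δ a τ [] = τ a :=
  LMonoid.finset_sup_ite_eq_mul τ a

theorem lang_cons (τ : A → L) (z : Z) (w : List Z) (a : A) :
    lang δ a τ (z :: w) = Finset.univ.sup fun c => δ a z c * lang δ c τ w := by
  rw [← List.singleton_append, lang_append]
  simp only [dstar_singleton]

variable {δ}

theorem isCrisp_dstar (hδ : ∀ a z b, IsCrisp (δ a z b)) (a : A) (w : List Z) (b : A) :
    IsCrisp (dstar δ a w b) := by
  induction w using List.reverseRecOn generalizing b with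
  | nil => by_cases h : a = b <;> simp [dstar_nil, h, IsCrisp]
  | append_singleton w z ih =>
    rw [dstar_append_singleton]
    exact IsCrisp.finset_sup fun c _ => (ih c).mul (hδ c z b)

end Runs

section RunWeights

variable {L X Y A : Type*} [IntegralLMonoid L] [Fintype A] (φY : Y → L) (δ : A → X ⊕ Y → A → L)

noncomputable def runWeight (a : A) (v : List (X ⊕ Y)) (b : A) : L :=
  phiStar φY v * dstar δ a v b

noncomputable def runWeights (a : A) (u : List X) (b : A) : Set L :=
  (runWeight φY δ a · b) '' UY Y u

noncomputable def acceptWeights (τ : A → L) (a : A) (u : List X) : Set L :=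
  (fun v => phiStar φY v * lang δ a τ v) '' UY Y u

theorem runWeight_nil (a b : A) : runWeight φY δ a [] b = if a = b then 1 else ⊥ :=
  one_mul _

theorem runWeight_singleton_inl (x : X) (a b : A) :
    runWeight φY δ a [Sum.inl x] b = δ a (Sum.inl x) b := by
  rw [runWeight, dstar_singleton, phiStar_cons_inl]
  exact one_mul _

theorem runWeight_singleton_inr (y : Y) (a b : A) :
    runWeight φY δ a [Sum.inr y] b = φY y * δ a (Sum.inr y) b := by
  rw [runWeight, dstar_singleton, phiStar_cons_inr]
  exact congrArg (· * _) (mul_one _)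

theorem phiStar_mul_lang (τ : A → L) (v : List (X ⊕ Y)) (a : A) :
    phiStar φY v * lang δ a τ v = Finset.univ.sup fun c => runWeight φY δ a v c * τ c := by
  simp only [lang, LMonoid.mul_finset_sup, runWeight, mul_assoc]

variable {φY δ}

theorem phiStar_append_mul_mul {D : L} (hD : IsCrisp D) (v₁ v₂ : List (X ⊕ Y)) (E : L) :
    phiStar φY (v₁ ++ v₂) * (D * E) = phiStar φY v₁ * D * (phiStar φY v₂ * E) := by
  rw [phiStar_append, ((hD.commute _).symm).mul_mul_mul_comm]

theorem runWeight_append (hδ : ∀ a z b, IsCrisp (δ a z b)) (v₁ v₂ : List (X ⊕ Y)) (a b : A) :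
    runWeight φY δ a (v₁ ++ v₂) b =
      Finset.univ.sup fun c => runWeight φY δ a v₁ c * runWeight φY δ c v₂ b := by
  rw [runWeight, dstar_append, LMonoid.mul_finset_sup]
  exact Finset.sup_congr rfl fun c _ => phiStar_append_mul_mul (isCrisp_dstar hδ a v₁ c) _ _ _

theorem phiStar_mul_lang_append (hδ : ∀ a z b, IsCrisp (δ a z b)) (τ : A → L)
    (v₁ v₂ : List (X ⊕ Y)) (a : A) :
    phiStar φY (v₁ ++ v₂) * lang δ a τ (v₁ ++ v₂) =
      Finset.univ.sup fun c => runWeight φY δ a v₁ c * (phiStar φY v₂ * lang δ c τ v₂) := by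
  rw [lang_append, LMonoid.mul_finset_sup]
  exact Finset.sup_congr rfl fun c _ => phiStar_append_mul_mul (isCrisp_dstar hδ a v₁ c) _ _ _

theorem phiStar_mul_lang_append_inl (hδ : ∀ a z b, IsCrisp (δ a z b)) (τ : A → L)
    (w : List (X ⊕ Y)) (x : X) (v : List (X ⊕ Y)) (a : A) :
    phiStar φY (w ++ Sum.inl x :: v) * lang δ a τ (w ++ Sum.inl x :: v) =
      Finset.univ.sup fun c => Finset.univ.sup fun d =>
        runWeight φY δ a w c * δ c (Sum.inl x) d * (phiStar φY v * lang δ d τ v) := by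
  rw [phiStar_mul_lang_append hδ]
  refine Finset.sup_congr rfl fun c _ => ?_
  rw [← List.singleton_append, phiStar_mul_lang_append hδ, LMonoid.mul_finset_sup]
  simp only [runWeight_singleton_inl, mul_assoc]

end RunWeights

section TransitiveClosure

variable {L X Y A : Type*} [IntegralLMonoid L] [Fintype A] [Fintype Y] {φY : Y → L}
  {δ : A → X ⊕ Y → A → L}

theorem runWeight_singleton_inr_le_Rstep (y : Y) (a b : A) :
    runWeight φY δ a [Sum.inr y] b ≤ Rstep φY δ a b := by
  rw [runWeight_singleton_inr, Rstep]
  split_ifs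
  · exact IntegralLMonoid.le_one _
  · exact Finset.le_sup (f := fun y => φY y * δ a (Sum.inr y) b) (Finset.mem_univ y)

theorem runWeight_le_rpow_Rstep (hδ : ∀ a z b, IsCrisp (δ a z b)) {v : List (X ⊕ Y)}
    (hv : v ∈ UY Y []) (a b : A) : runWeight φY δ a v b ≤ rpow (Rstep φY δ) v.length a b := by
  induction v generalizing a with
  | nil => exact (runWeight_nil φY δ a b).le
  | cons z v ih =>
    rcases z with x | y
    · simp [mem_UY] at hv
    rw [List.length_cons, rpow_succ', ← List.singleton_append, runWeight_append hδ]
    exact Finset.sup_mono_fun fun c _ =>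
      mul_le_mul' (runWeight_singleton_inr_le_Rstep y a c) (ih (cons_inr_mem_UY_iff.1 hv) c)

theorem leFinSup_Rstep (a b : A) : LeFinSup (runWeights φY δ a [] b) (Rstep φY δ a b) := by
  rw [Rstep]
  split_ifs with hab
  · exact .of_mem ⟨[], rfl, (runWeight_nil φY δ a b).trans (if_pos hab)⟩
  · exact LeFinSup.finset_sup fun y _ =>
      .of_mem ⟨[Sum.inr y], cons_inr_mem_UY_iff.2 rfl, runWeight_singleton_inr φY δ y a b⟩

theorem leFinSup_rpow_Rstep (hδ : ∀ a z b, IsCrisp (δ a z b)) (n : ℕ) (a b : A) :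
    LeFinSup (runWeights φY δ a [] b) (rpow (Rstep φY δ) n a b) := by
  induction n generalizing b with
  | zero => exact .of_mem ⟨[], rfl, runWeight_nil φY δ a b⟩
  | succ n ih =>
    refine LeFinSup.finset_sup fun c _ =>
      ((ih c).mul (leFinSup_Rstep c b)).mono_of_forall_exists_le ?_
    rintro _ ⟨_, ⟨v₁, hv₁, rfl⟩, _, ⟨v₂, hv₂, rfl⟩, rfl⟩
    refine ⟨_, ⟨v₁ ++ v₂, append_mem_UY hv₁ hv₂, rfl⟩, ?_⟩
    dsimp only
    rw [runWeight_append hδ]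
    exact Finset.le_sup (f := fun c => runWeight φY δ a v₁ c * runWeight φY δ c v₂ b)
      (Finset.mem_univ c)

theorem isFinSup_RA (hδ : ∀ a z b, IsCrisp (δ a z b)) (a b : A) :
    IsFinSup (runWeights φY δ a [] b) (RA φY δ a b) := by
  refine ⟨?_, leFinSup_rpow_Rstep hδ _ a b⟩
  rintro _ ⟨v, hv, rfl⟩
  exact (runWeight_le_rpow_Rstep hδ hv a b).trans
    (rpow_le_rpow_card (R := Rstep φY δ) (fun _ => if_pos rfl) v.length a b)

end TransitiveClosure

section Reduced

variable {L X Y A : Type*} [IntegralLMonoid L] [Fintype A] [Fintype Y]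

noncomputable def reducedDelta (φY : Y → L) (δ : A → X ⊕ Y → A → L) (S : Set A) :
    S → X → S → L :=
  fun p x q => fcomp (RA φY δ) (fun c d => δ c (Sum.inl x) d) p.1 q.1

noncomputable def reducedTau (φY : Y → L) (δ : A → X ⊕ Y → A → L) (τ : A → L) (S : Set A) :
    S → L :=
  fun p => fcompf (RA φY δ) τ p.1

variable (φY : Y → L) {δ : A → X ⊕ Y → A → L} (τ : A → L) {S : Set A}

theorem isFinSup_reducedTau (hδ : ∀ a z b, IsCrisp (δ a z b)) (p : S) :
    IsFinSup (acceptWeights φY δ τ p []) (reducedTau φY δ τ S p) := by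
  have h := IsFinSup.biUnion (I := Finset.univ) fun c _ =>
    (isFinSup_RA (φY := φY) hδ p c).mul (IsFinSup.singleton (τ c))
  refine h.of_forall_exists_le ?_ ?_
  · intro _ hmem
    obtain ⟨c, -, _, ⟨v, hv, rfl⟩, _, rfl, rfl⟩ := Set.mem_iUnion₂.1 hmem
    refine ⟨_, ⟨v, hv, rfl⟩, ?_⟩
    dsimp only
    rw [phiStar_mul_lang]
    exact Finset.le_sup (f := fun c => runWeight φY δ p v c * τ c) (Finset.mem_univ c)
  · rintro _ ⟨v, hv, rfl⟩
    dsimp only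
    rw [phiStar_mul_lang]
    exact Finset.sup_le fun c _ =>
      h.1 (Set.mem_iUnion₂.2 ⟨c, Finset.mem_univ c, Set.mul_mem_mul ⟨v, hv, rfl⟩ rfl⟩)

/-- Only states of `S` can be reached right after reading a letter of `X`, so restricting the
reduced automaton to `S` loses no runs. -/
theorem isFinSup_lang_reduced_cons [Fintype S] (hδ : ∀ a z b, IsCrisp (δ a z b))
    (hS : ∀ c x d, δ c (Sum.inl x) d = 1 → d ∈ S) (x : X) (u : List X)
    (ih : ∀ q : S, IsFinSup (acceptWeights φY δ τ q u)
      (lang (reducedDelta φY δ S) q (reducedTau φY δ τ S) u)) (p : S) :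
    IsFinSup (acceptWeights φY δ τ p (x :: u))
      (lang (reducedDelta φY δ S) p (reducedTau φY δ τ S) (x :: u)) := by
  have h := IsFinSup.biUnion (I := (Finset.univ : Finset S)) fun q _ =>
    IsFinSup.biUnion (I := Finset.univ) fun c _ =>
      ((isFinSup_RA (φY := φY) hδ p c).mul (IsFinSup.singleton (δ c (Sum.inl x) q))).mul (ih q)
  rw [lang_cons]
  simp only [reducedDelta, fcomp, LMonoid.finset_sup_mul]
  refine h.of_forall_exists_le ?_ ?_
  · intro _ hmem
    obtain ⟨q, -, hmem⟩ := Set.mem_iUnion₂.1 hmem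
    obtain ⟨c, -, _, ⟨_, ⟨w, hw, rfl⟩, _, rfl, rfl⟩, _, ⟨v, hv, rfl⟩, rfl⟩ :=
      Set.mem_iUnion₂.1 hmem
    refine ⟨_, ⟨w ++ Sum.inl x :: v, mem_UY_cons_iff.2 ⟨w, hw, v, hv, rfl⟩, rfl⟩, ?_⟩
    dsimp only
    rw [phiStar_mul_lang_append_inl hδ]
    exact Finset.le_sup_of_le (Finset.mem_univ c) (Finset.le_sup (f := fun d =>
      runWeight φY δ p w c * δ c (Sum.inl x) d * (phiStar φY v * lang δ d τ v))
      (Finset.mem_univ q.1))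
  · rintro _ ⟨_, hmem, rfl⟩
    obtain ⟨w, hw, v, hv, rfl⟩ := mem_UY_cons_iff.1 hmem
    dsimp only
    rw [phiStar_mul_lang_append_inl hδ]
    refine Finset.sup_le fun c _ => Finset.sup_le fun d _ => ?_
    rcases hδ c (Sum.inl x) d with hcd | hcd
    · refine h.1 (Set.mem_iUnion₂.2 ⟨⟨d, hS c x d hcd⟩, Finset.mem_univ _, ?_⟩)
      exact Set.mem_iUnion₂.2 ⟨c, Finset.mem_univ c,
        Set.mul_mem_mul (Set.mul_mem_mul ⟨w, hw, rfl⟩ rfl) ⟨v, hv, rfl⟩⟩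
    · rw [hcd, LMonoid.mul_bot, LMonoid.bot_mul]
      exact bot_le

theorem isFinSup_lang_reduced [Fintype S] (hδ : ∀ a z b, IsCrisp (δ a z b))
    (hS : ∀ c x d, δ c (Sum.inl x) d = 1 → d ∈ S) (u : List X) (p : S) :
    IsFinSup (acceptWeights φY δ τ p u) (lang (reducedDelta φY δ S) p (reducedTau φY δ τ S) u) := by
  induction u generalizing p with
  | nil =>
    rw [lang_nil]
    exact isFinSup_reducedTau φY τ hδ p
  | cons x u ih => exact isFinSup_lang_reduced_cons φY τ hδ hS x u ih p

end Reduced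

end Fz

open Fz in
/-- **Theorem 5 of the paper.** Let `L` be an integral ℓ-monoid, `α` a
fuzzy regular expression over a finite alphabet `X` with associated alphabet `Y`,
`A = (A, X∪Y, δ, a₀, τ)` an arbitrary nondeterministic finite automaton recognizing
`‖α_R‖`, and `A^r_α` the reduced fuzzy automaton associated with `A` and `α`
(with state set `A^r_α`, transitions `δ^{A^r_α}_x = R_A ∘ δ_x` and terminal fuzzy set
`τ^{A^r_α} = R_A ∘ τ`, restricted to `A^r_α`).  Then `L(A^r_α) = ‖α‖`. -/
theorem stmt11 {L X Y A : Type*} [IntegralLMonoid L] [Fintype Y] [Fintype A]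
    (α : FRE X L) (sc : L → Y) (φY : Y → L)
    (hφY : ∀ l ∈ α.scalars, φY (sc l) = l)
    (δ : A → X ⊕ Y → A → L) (a0 : A) (τ : A → L)
    (hδ : ∀ a z b, δ a z b = 1 ∨ δ a z b = ⊥)
    (hrec : ∀ v : List (X ⊕ Y), lang δ a0 τ v = langR sc α v)
    (f : List X → L) (hf : IsNorm α f) :
    ∀ u : List X,
      lang
        (fun (p : redStates δ a0) (x : X) (q : redStates δ a0) =>
          fcomp (RA φY δ) (fun c d => δ c (Sum.inl x) d) p.1 q.1)
        (⟨a0, by exact Or.inl rfl⟩ : redStates δ a0)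
        (fun p : redStates δ a0 => fcompf (RA φY δ) τ p.1)
        u = f u := by
  intro u
  have hα := isFinSup_norm sc hf hφY u
  have hA := isFinSup_lang_reduced φY τ (S := redStates δ a0) hδ
    (fun c x d h => Or.inr ⟨c, x, h⟩) u ⟨a0, Or.inl rfl⟩
  apply le_antisymm
  · refine hA.le_of_mem_upperBounds ?_
    rintro _ ⟨v, hv, rfl⟩
    dsimp only
    rw [hrec, langR]
    split_ifs with hvα
    · rw [mul_one]
      exact hα.1 ⟨v, ⟨hv, hvα⟩, rfl⟩
    · rw [LMonoid.mul_bot]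
      exact bot_le
  · refine hα.le_of_mem_upperBounds ?_
    rintro _ ⟨v, ⟨hv, hvα⟩, rfl⟩
    have hacc : phiStar φY v * lang δ a0 τ v = phiStar φY v := by
      rw [hrec, langR, if_pos hvα, mul_one]
    exact hacc ▸ hA.1 ⟨v, hv, rfl⟩
end

section
/- Let L be an integral ℓ-monoid, let α be a fuzzy regular expression over a finite alphabet X with associated alphabet Y, let A = (A, X∪Y, δ^A, a₀, τ^A) be an arbitrary nondeterministic finite automaton recognizing ‖α_R‖, and let E be a right invariant crisp equivalence on A. Then E∘R_A ≤ R_A∘E. -/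
attribute [local instance] Classical.propDecidable

section Aux

open Fz

variable {L : Type*} [IntegralLMonoid L]

private lemma aux_mul_le_left (x y : L) : x * y ≤ x := by
  have h := LMonoid.mul_sup x y ⊤
  rw [sup_top_eq] at h
  have : x * y ≤ x * ⊤ := h ▸ le_sup_left
  simpa [← IntegralLMonoid.one_eq_top] using this

private lemma aux_mul_le_right (x y : L) : x * y ≤ y := by
  have h := LMonoid.sup_mul x ⊤ y
  rw [sup_top_eq] at h
  have : x * y ≤ ⊤ * y := h ▸ le_sup_left
  simpa [← IntegralLMonoid.one_eq_top] using this

private lemma aux_mul_le_mul {x x' y y' : L} (hx : x ≤ x') (hy : y ≤ y') :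
    x * y ≤ x' * y' := by
  have h1 : x * y ≤ x' * y := by
    have h := LMonoid.sup_mul x x' y
    rw [sup_eq_right.2 hx] at h
    exact h ▸ le_sup_left
  have h2 : x' * y ≤ x' * y' := by
    have h := LMonoid.mul_sup x' y y'
    rw [sup_eq_right.2 hy] at h
    exact h ▸ le_sup_left
  exact h1.trans h2

private lemma aux_mul_sup_finset {ι : Type*} (x : L) (s : Finset ι) (f : ι → L) :
    x * s.sup f = s.sup fun i => x * f i := by
  induction s using Finset.cons_induction with
  | empty => simpa using LMonoid.mul_bot x
  | cons a s ha ih => simp [Finset.sup_cons, LMonoid.mul_sup, ih]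

private lemma aux_sup_mul_finset {ι : Type*} (x : L) (s : Finset ι) (f : ι → L) :
    s.sup f * x = s.sup fun i => f i * x := by
  induction s using Finset.cons_induction with
  | empty => simpa using LMonoid.bot_mul x
  | cons a s ha ih => simp [Finset.sup_cons, LMonoid.sup_mul, ih]

variable {A : Type*} [Fintype A]

private lemma aux_fcomp_mono_left {R R' S : A → A → L} (h : ∀ a b, R a b ≤ R' a b) :
    ∀ a b, fcomp R S a b ≤ fcomp R' S a b := by
  intro a b
  exact Finset.sup_mono_fun fun c _ => aux_mul_le_mul (h a c) le_rfl

private lemma aux_fcomp_mono_right {R S S' : A → A → L} (h : ∀ a b, S a b ≤ S' a b) :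
    ∀ a b, fcomp R S a b ≤ fcomp R S' a b := by
  intro a b
  exact Finset.sup_mono_fun fun c _ => aux_mul_le_mul le_rfl (h c b)

private lemma aux_fcomp_assoc (R S T : A → A → L) (a b : A) :
    fcomp (fcomp R S) T a b = fcomp R (fcomp S T) a b := by
  unfold fcomp
  simp only [aux_sup_mul_finset, aux_mul_sup_finset]
  rw [Finset.sup_comm]
  exact Finset.sup_congr rfl fun c _ => Finset.sup_congr rfl fun d _ => mul_assoc _ _ _

private lemma aux_fcomp_id_right (R : A → A → L) (a b : A) :
    fcomp R (fun a b => if a = b then (1 : L) else ⊥) a b = R a b := by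
  unfold fcomp
  apply le_antisymm
  · apply Finset.sup_le
    intro c _
    by_cases hc : c = b
    · subst hc; simp
    · simp [hc, LMonoid.mul_bot]
  · have := Finset.le_sup (f := fun c => R a c * if c = b then (1 : L) else ⊥)
      (Finset.mem_univ b)
    simpa using this

private lemma aux_fcomp_id_left (R : A → A → L) (a b : A) :
    fcomp (fun a b => if a = b then (1 : L) else ⊥) R a b = R a b := by
  unfold fcomp
  apply le_antisymm
  · apply Finset.sup_le
    intro c _
    by_cases hc : a = c
    · subst hc; simp
    · simp [hc, LMonoid.bot_mul]
  · have := Finset.le_sup (f := fun c => (if a = c then (1 : L) else ⊥) * R c b)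
      (Finset.mem_univ a)
    simpa using this

private lemma aux_step {X Y : Type*} [Fintype Y]
    (φY : Y → L) (δ : A → X ⊕ Y → A → L)
    (hδ : ∀ a z b, δ a z b = 1 ∨ δ a z b = ⊥)
    (E : A → A → L)
    (hcrisp : ∀ a b, E a b = 1 ∨ E a b = ⊥)
    (hrefl : ∀ a, E a a = 1)
    (hrinv : ∀ (z : X ⊕ Y) (a b : A),
      fcomp E (fun p q => δ p z q) a b ≤ fcomp (fun p q => δ p z q) E a b) :
    ∀ a b : A, fcomp E (Rstep φY δ) a b ≤ fcomp (Rstep φY δ) E a b := by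
  intro a b
  apply Finset.sup_le
  intro c _
  by_cases hcb : c = b
  · subst hcb
    have hRaa : Rstep φY δ a a = 1 := by simp [Rstep]
    have h1 : E a c * Rstep φY δ c c = Rstep φY δ a a * E a c := by
      simp [Rstep, hRaa]
    rw [h1]
    exact Finset.le_sup (f := fun d => Rstep φY δ a d * E d c) (Finset.mem_univ a)
  · have hR : Rstep φY δ c b = Finset.univ.sup fun y : Y => φY y * δ c (Sum.inr y) b := by
      simp [Rstep, hcb]
    rw [hR, aux_mul_sup_finset]
    apply Finset.sup_le
    intro y _
    rcases hcrisp a c with hE | hE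
    · rcases hδ c (Sum.inr y) b with hd | hd
      · -- E a c = 1 and δ c (inr y) b = 1
        have hterm : E a c * (φY y * δ c (Sum.inr y) b) = φY y := by
          rw [hE, one_mul, hd, mul_one]
        rw [hterm]
        -- use right invariance at z = inr y
        have hle : (1 : L) ≤ fcomp (fun p q => δ p (Sum.inr y) q) E a b := by
          refine le_trans ?_ (hrinv (Sum.inr y) a b)
          have : E a c * δ c (Sum.inr y) b = 1 := by rw [hE, hd, one_mul]
          calc (1 : L) = E a c * δ c (Sum.inr y) b := this.symm
            _ ≤ _ := Finset.le_sup (f := fun d => E a d * δ d (Sum.inr y) b)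
                (Finset.mem_univ c)
        by_cases hex : ∃ d, δ a (Sum.inr y) d = 1 ∧ E d b = 1
        · obtain ⟨d, hd1, hd2⟩ := hex
          have hRad : φY y ≤ Rstep φY δ a d := by
            by_cases had : a = d
            · subst had
              simp only [Rstep, if_pos rfl, IntegralLMonoid.one_eq_top]
              exact le_top
            · simp only [Rstep, if_neg had]
              have := Finset.le_sup (f := fun y' : Y => φY y' * δ a (Sum.inr y') d)
                (Finset.mem_univ y)
              simpa [hd1] using this
          calc φY y ≤ Rstep φY δ a d := hRad
            _ = Rstep φY δ a d * E d b := by rw [hd2, mul_one]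
            _ ≤ _ := Finset.le_sup (f := fun d => Rstep φY δ a d * E d b)
                (Finset.mem_univ d)
        · -- all terms bot: then 1 ≤ ⊥ and everything collapses
          push_neg at hex
          have hbot : fcomp (fun p q => δ p (Sum.inr y) q) E a b = ⊥ := by
            apply le_antisymm _ bot_le
            apply Finset.sup_le
            intro d _
            rcases hδ a (Sum.inr y) d with h1 | h1
            · rcases hcrisp d b with h2 | h2
              · exact absurd h2 (hex d h1)
              · show δ a (Sum.inr y) d * E d b ≤ ⊥
                rw [h2, LMonoid.mul_bot]
            · show δ a (Sum.inr y) d * E d b ≤ ⊥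
              rw [h1, LMonoid.bot_mul]
          rw [hbot] at hle
          calc φY y ≤ ⊤ := le_top
            _ = (1 : L) := IntegralLMonoid.one_eq_top.symm
            _ ≤ ⊥ := hle
            _ ≤ _ := bot_le
      · rw [hd, LMonoid.mul_bot, LMonoid.mul_bot]
        exact bot_le
    · rw [hE, LMonoid.bot_mul]
      exact bot_le

end Aux

open Fz in
/-- **Proposition 2(a) of the paper.** Let `L` be an integral ℓ-monoid,
`α` a fuzzy regular expression over a finite alphabet `X` with associated alphabet `Y`,
`A = (A, X∪Y, δ, a₀, τ)` an arbitrary nondeterministic finite automaton recognizing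
`‖α_R‖`, and `E` a right invariant crisp equivalence on `A`.  Then `E ∘ R_A ≤ R_A ∘ E`. -/
theorem stmt15 {L X Y A : Type*} [IntegralLMonoid L] [Fintype X] [Fintype Y] [Fintype A]
    (α : FRE X L) (sc : L → Y) (φY : Y → L)
    (hsc : Set.BijOn sc α.scalars (Set.univ : Set Y))
    (hφY : ∀ l ∈ α.scalars, φY (sc l) = l)
    (δ : A → X ⊕ Y → A → L) (a0 : A) (τ : A → L)
    (hδ : ∀ a z b, δ a z b = 1 ∨ δ a z b = ⊥)
    (hτ : ∀ a, τ a = 1 ∨ τ a = ⊥)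
    (hrec : ∀ v : List (X ⊕ Y), lang δ a0 τ v = langR sc α v)
    (E : A → A → L)
    (hcrisp : ∀ a b, E a b = 1 ∨ E a b = ⊥)
    (hrefl : ∀ a, E a a = 1) (hsymm : ∀ a b, E a b = E b a)
    (htrans : ∀ a b c, E a b * E b c ≤ E a c)
    (hrinv : ∀ (z : X ⊕ Y) (a b : A),
      fcomp E (fun p q => δ p z q) a b ≤ fcomp (fun p q => δ p z q) E a b)
    (hτinv : ∀ a, fcompf E τ a = τ a) :
    ∀ a b : A, fcomp E (RA φY δ) a b ≤ fcomp (RA φY δ) E a b := by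
  have step := aux_step φY δ hδ E hcrisp hrefl hrinv
  have key : ∀ k, ∀ a b : A,
      fcomp E (rpow (Rstep φY δ) k) a b ≤ fcomp (rpow (Rstep φY δ) k) E a b := by
    intro k
    induction k with
    | zero =>
      intro a b
      show fcomp E (fun a b => if a = b then (1 : L) else ⊥) a b ≤
        fcomp (fun a b => if a = b then (1 : L) else ⊥) E a b
      rw [aux_fcomp_id_right, aux_fcomp_id_left]
    | succ k ih =>
      intro a b
      show fcomp E (fcomp (rpow (Rstep φY δ) k) (Rstep φY δ)) a b ≤
        fcomp (fcomp (rpow (Rstep φY δ) k) (Rstep φY δ)) E a b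
      calc fcomp E (fcomp (rpow (Rstep φY δ) k) (Rstep φY δ)) a b
          = fcomp (fcomp E (rpow (Rstep φY δ) k)) (Rstep φY δ) a b :=
            (aux_fcomp_assoc _ _ _ a b).symm
        _ ≤ fcomp (fcomp (rpow (Rstep φY δ) k) E) (Rstep φY δ) a b :=
            aux_fcomp_mono_left (fun a b => ih a b) a b
        _ = fcomp (rpow (Rstep φY δ) k) (fcomp E (Rstep φY δ)) a b :=
            aux_fcomp_assoc _ _ _ a b
        _ ≤ fcomp (rpow (Rstep φY δ) k) (fcomp (Rstep φY δ) E) a b :=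
            aux_fcomp_mono_right (fun a b => step a b) a b
        _ = fcomp (fcomp (rpow (Rstep φY δ) k) (Rstep φY δ)) E a b :=
            (aux_fcomp_assoc _ _ _ a b).symm
  exact key (Fintype.card A)
end
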